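/- arXiv:2404.12213 — 2 statements merged into one kernel-verified Lean document; each statement's English description precedes it below -/
import Mathlib

section
/- The derivative of the Bregman distance along a mirror step: with x⁺(η) defined by ∇h(x⁺(η)) = ∇h(x) - η·g, one has d/dη [D_h(x, x⁺(η))] = (1/η)·(D_h(x, x⁺(η)) + D_h(x⁺(η), x)). -/
/-! The symmetrised divergence `D(x, x⁺) + D(x⁺, x)` equals `⟪∇h x - ∇h x⁺, x - x⁺⟫ = η ⟪g, x - x⁺⟫`,
while differentiating `D(x, x⁺(t))` in `t` the two terms involving `(x⁺)'` cancel, leaving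
`-⟪(∇h ∘ x⁺)', x - x⁺⟫ = ⟪g, x - x⁺⟫`. -/

open MeasureTheory
open scoped RealInnerProductSpace

/-- Bregman divergence of `g` with gradient map `g'`. -/
noncomputable def Dbreg {d : ℕ} (g : EuclideanSpace ℝ (Fin d) → ℝ)
    (g' : EuclideanSpace ℝ (Fin d) → EuclideanSpace ℝ (Fin d))
    (x y : EuclideanSpace ℝ (Fin d)) : ℝ :=
  g x - g y - ⟪g' y, x - y⟫

section Bregman

variable {d : ℕ} {h : EuclideanSpace ℝ (Fin d) → ℝ}
  {h' : EuclideanSpace ℝ (Fin d) → EuclideanSpace ℝ (Fin d)}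

theorem Dbreg_add_Dbreg_swap (x y : EuclideanSpace ℝ (Fin d)) :
    Dbreg h h' x y + Dbreg h h' y x = ⟪h' x - h' y, x - y⟫ := by
  simp only [Dbreg, inner_sub_left, inner_sub_right]
  ring

theorem hasDerivAt_Dbreg_right_comp {x : EuclideanSpace ℝ (Fin d)}
    {c : ℝ → EuclideanSpace ℝ (Fin d)} {v w : EuclideanSpace ℝ (Fin d)} {t : ℝ}
    (hgrad : HasGradientAt h (h' (c t)) (c t)) (hc : HasDerivAt c v t)
    (hgc : HasDerivAt (fun s => h' (c s)) w t) :
    HasDerivAt (fun s => Dbreg h h' x (c s)) (-⟪w, x - c t⟫) t := by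
  have hhc : HasDerivAt (fun s => h (c s)) ⟪h' (c t), v⟫ t := by
    simpa [Function.comp_def] using hgrad.hasFDerivAt.comp_hasDerivAt t hc
  have hD : HasDerivAt (fun s => h x - h (c s) - ⟪h' (c s), x - c s⟫)
      (0 - ⟪h' (c t), v⟫ - (⟪h' (c t), 0 - v⟫ + ⟪w, x - c t⟫)) t :=
    ((hasDerivAt_const t (h x)).sub hhc).sub (hgc.inner ℝ ((hasDerivAt_const t x).sub hc))
  exact hD.congr_deriv (by simp only [inner_sub_right, inner_zero_right]; ring)

end Bregman

theorem bregman_step_deriv_general {d : ℕ}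
    (h : EuclideanSpace ℝ (Fin d) → ℝ)
    (h' : EuclideanSpace ℝ (Fin d) → EuclideanSpace ℝ (Fin d))
    (hgrad : ∀ z, HasGradientAt h (h' z) z)
    (x g : EuclideanSpace ℝ (Fin d))
    (xp : ℝ → EuclideanSpace ℝ (Fin d))
    (hxp : ∀ η, h' (xp η) = h' x - η • g)
    (η : ℝ) (hη : 0 < η)
    (v : EuclideanSpace ℝ (Fin d)) (hdiff : HasDerivAt xp v η) :
    HasDerivAt (fun t => Dbreg h h' x (xp t))
      ((1 / η) * (Dbreg h h' x (xp η) + Dbreg h h' (xp η) x)) η := by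
  have hmirror : HasDerivAt (fun t => h' (xp t)) (-g) η := by
    simp only [hxp]
    simpa [Pi.sub_def] using (hasDerivAt_const η (h' x)).sub ((hasDerivAt_id η).smul_const g)
  convert hasDerivAt_Dbreg_right_comp (hgrad (xp η)) hdiff hmirror using 1
  rw [Dbreg_add_Dbreg_swap, hxp, sub_sub_cancel, real_inner_smul_left, inner_neg_left]
  field_simp

/-- derivative of the Bregman distance along a mirror step. -/
theorem bregman_step_deriv {d : ℕ}
    (h : EuclideanSpace ℝ (Fin d) → ℝ)
    (h' : EuclideanSpace ℝ (Fin d) → EuclideanSpace ℝ (Fin d))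
    (hC2 : ContDiff ℝ 2 h)
    (hconv : StrictConvexOn ℝ Set.univ h)
    (hgrad : ∀ z, HasGradientAt h (h' z) z)
    (x g : EuclideanSpace ℝ (Fin d))
    (xp : ℝ → EuclideanSpace ℝ (Fin d))
    (hxp : ∀ η, h' (xp η) = h' x - η • g)
    (η : ℝ) (hη : 0 < η)
    (v : EuclideanSpace ℝ (Fin d)) (hdiff : HasDerivAt xp v η) :
    HasDerivAt (fun t => Dbreg h h' x (xp t))
      ((1 / η) * (Dbreg h h' x (xp η) + Dbreg h h' (xp η) x)) η :=
  bregman_step_deriv_general h h' hgrad x g xp hxp η hη v hdiff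
end

section
/- Variance upper bound at the transformed optimum: if f is L-relatively smooth w.r.t. h, η ≤ 1/L, and x_η minimizes f_η(x) = f(x) - (1/η)E[D_h(x, x⁺)], then the variance σ²_{⋆,η} = (f(x_⋆) - f_η(x_η))/η satisfies σ²_{⋆,η} ≤ (1/η²)·E[D_h(x̄_η⁺, x_η⁺)], where x̄_η⁺ is the deterministic update from x_η and x_η⁺ the stochastic one. -/
/-!
Since `∇h* ∘ ∇h = id` and `h*` is differentiable everywhere, the supremum defining `h*` is finite
everywhere, and then `∇h ∘ ∇h* = id` too. So `∇h x⁺ = ∇h x_η - η ∇f_ξ(x_η)` and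
`∇h x̄⁺ = ∇h x_η - η ∇f(x_η)`, and the three-point identity for Bregman divergences gives
`E[D_h(x_η, x⁺)] = E[D_h(x̄⁺, x⁺)] + D_h(x_η, x̄⁺)`. The claim becomes
`η (f(x_⋆) - f(x_η)) + D_h(x_η, x̄⁺) ≤ 0`, which follows from `f(x_⋆) ≤ f(x̄⁺)` and the descent
inequality of the mirror step `x_η ↦ x̄⁺` with `η L ≤ 1`.
-/

open MeasureTheory
open scoped RealInnerProductSpace

open Set Filter Topology AffineMap

section Gradient

variable {E : Type*} [NormedAddCommGroup E] [InnerProductSpace ℝ E] [CompleteSpace E]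
  {f : E → ℝ} {g x y : E}

theorem HasGradientAt.hasDerivAt_comp_lineMap {t : ℝ}
    (hf : HasGradientAt f g (lineMap x y t)) :
    HasDerivAt (f ∘ lineMap x y) ⟪g, y - x⟫ t := by
  simpa using hf.hasFDerivAt.comp_hasDerivAt t hasDerivAt_lineMap

theorem HasGradientAt.inner_const_sub (hf : HasGradientAt f g x) (w : E) :
    HasGradientAt (fun z => ⟪z, w⟫ - f z) (w - g) x := by
  rw [hasGradientAt_iff_hasFDerivAt, map_sub]
  refine HasFDerivAt.sub ?_ hf.hasFDerivAt
  have hlin : (fun z => ⟪z, w⟫) = InnerProductSpace.toDual ℝ E w := by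
    ext z
    simp [real_inner_comm]
  exact hlin ▸ (InnerProductSpace.toDual ℝ E w).hasFDerivAt

theorem IsLocalMax.hasGradientAt_eq_zero (hmax : IsLocalMax f x) (hf : HasGradientAt f g x) :
    g = 0 := by
  simpa using hmax.hasFDerivAt_eq_zero hf

theorem ConvexOn.add_inner_gradient_le {s : Set E} (hconv : ConvexOn ℝ s f) (hx : x ∈ s)
    (hy : y ∈ s) (hf : HasGradientAt f g x) : f x + ⟪g, y - x⟫ ≤ f y := by
  have hline : ConvexOn ℝ (Icc (0 : ℝ) 1) (f ∘ lineMap x y) :=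
    (hconv.comp_affineMap (lineMap x y)).subset (fun _ ht => hconv.1.lineMap_mem hx hy ht)
      (convex_Icc 0 1)
  have hderiv : HasDerivAt (f ∘ lineMap x y) ⟪g, y - x⟫ (0 : ℝ) :=
    HasGradientAt.hasDerivAt_comp_lineMap (by rwa [lineMap_apply_zero])
  have := hline.le_slope_of_hasDerivAt (by simp) (by simp) zero_lt_one hderiv
  simp [slope_def_field] at this
  linarith

theorem ConvexOn.inner_gradient_sub_nonneg {s : Set E} {g' : E} (hconv : ConvexOn ℝ s f)
    (hx : x ∈ s) (hy : y ∈ s) (hfx : HasGradientAt f g x) (hfy : HasGradientAt f g' y) :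
    0 ≤ ⟪g' - g, y - x⟫ := by
  have h₁ := hconv.add_inner_gradient_le hx hy hfx
  have h₂ := hconv.add_inner_gradient_le hy hx hfy
  rw [← neg_sub y x, inner_neg_right] at h₂
  rw [inner_sub_left]
  linarith

theorem apply_le_apply_zero_of_inner_gradient_nonpos {f' : E → E}
    (hf : ∀ z, HasGradientAt f (f' z) z) (hrad : ∀ z, ⟪z, f' z⟫ ≤ 0) (z : E) : f z ≤ f 0 := by
  have hderiv (t : ℝ) : HasDerivAt (f ∘ lineMap 0 z) ⟪f' (lineMap 0 z t), z - 0⟫ t :=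
    (hf _).hasDerivAt_comp_lineMap
  obtain ⟨c, hc, hslope⟩ := exists_hasDerivAt_eq_slope (f ∘ lineMap 0 z) _ zero_lt_one
    (HasDerivAt.continuousOn fun t _ => hderiv t) fun t _ => hderiv t
  have hcz : lineMap 0 z c = c • z := by simp [lineMap_apply_module']
  have := hrad (c • z)
  rw [hcz, sub_zero] at hslope
  rw [real_inner_smul_left, real_inner_comm, hslope] at this
  simp only [Function.comp_apply, lineMap_apply_one, lineMap_apply_zero, sub_zero, div_one] at this
  nlinarith [hc.1]

end Gradient

theorem HasDerivAt.eq_zero_of_eqOn_Ioo {φ : ℝ → ℝ} {a b d : ℝ} (hφ : HasDerivAt φ d a)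
    (hab : a < b) (h0 : EqOn φ 0 (Ioo a b)) : d = 0 := by
  have hev : φ =ᶠ[𝓝[>] a] 0 := eventuallyEq_of_mem (Ioo_mem_nhdsGT hab) h0
  have ha : φ a = 0 := tendsto_nhds_unique
    (hφ.continuousAt.tendsto.mono_left nhdsWithin_le_nhds) (tendsto_const_nhds.congr' hev.symm)
  exact (uniqueDiffWithinAt_Ioi a).eq_deriv _ hφ.hasDerivWithinAt
    ((hasDerivWithinAt_const a _ 0).congr_of_eventuallyEq hev ha)

theorem IsClosed.exists_lineMap_mem_forall_notMem {E : Type*} [AddCommGroup E] [Module ℝ E]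
    [TopologicalSpace E] [IsTopologicalAddGroup E] [ContinuousSMul ℝ E] {s : Set E} {x y : E}
    (hs : IsClosed s) (hx : x ∈ s) (hy : y ∉ s) :
    ∃ τ ∈ Ico (0 : ℝ) 1, lineMap x y τ ∈ s ∧ ∀ t ∈ Ioc τ 1, lineMap x y t ∉ s := by
  set T := Icc (0 : ℝ) 1 ∩ lineMap x y ⁻¹' s
  have hT : IsClosed T := isClosed_Icc.inter (hs.preimage lineMap_continuous)
  have hT0 : (0 : ℝ) ∈ T := ⟨left_mem_Icc.2 zero_le_one, by simpa using hx⟩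
  have hbdd : BddAbove T := bddAbove_Icc.mono inter_subset_left
  obtain ⟨⟨hτ0, hτ1⟩, hτs⟩ : sSup T ∈ T := hT.csSup_mem ⟨0, hT0⟩ hbdd
  refine ⟨sSup T, ⟨hτ0, hτ1.lt_of_ne ?_⟩, hτs, fun t ht hts => ?_⟩
  · rintro hτ
    rw [hτ, mem_preimage, lineMap_apply_one] at hτs
    exact hy hτs
  · exact (le_csSup hbdd ⟨⟨hτ0.trans ht.1.le, ht.2⟩, hts⟩).not_gt ht.1

section Conjugate

variable {E : Type*} [NormedAddCommGroup E] [InnerProductSpace ℝ E] {h hs : E → ℝ}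

/-- The set where the supremum defining the Fenchel conjugate of `h` is finite; elsewhere `⨆`
takes the junk value `0`. -/
def conjugateDomain (h : E → ℝ) : Set E :=
  {y | BddAbove (range fun z => ⟪z, y⟫ - h z)}

theorem inner_sub_le_of_mem_conjugateDomain (hconj : ∀ y, hs y = ⨆ z, ⟪z, y⟫ - h z) {y : E}
    (hy : y ∈ conjugateDomain h) (z : E) : ⟪z, y⟫ - h z ≤ hs y :=
  hconj y ▸ le_ciSup hy z

theorem isClosed_conjugateDomain (hconj : ∀ y, hs y = ⨆ z, ⟪z, y⟫ - h z) (hcont : Continuous hs) :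
    IsClosed (conjugateDomain h) := by
  have hD : conjugateDomain h = ⋂ z, {y | ⟪z, y⟫ - h z ≤ hs y} := by
    ext y
    simp only [mem_iInter, mem_ofPred_eq]
    exact ⟨inner_sub_le_of_mem_conjugateDomain hconj, fun H => ⟨hs y, forall_mem_range.2 H⟩⟩
  rw [hD]
  exact isClosed_iInter fun z => isClosed_le (by fun_prop) hcont

theorem convexOn_conjugateDomain (hconj : ∀ y, hs y = ⨆ z, ⟪z, y⟫ - h z) :
    ConvexOn ℝ (conjugateDomain h) hs := by
  have hcomb {y₁ y₂ : E} (hy₁ : y₁ ∈ conjugateDomain h) (hy₂ : y₂ ∈ conjugateDomain h)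
      {a b : ℝ} (ha : 0 ≤ a) (hb : 0 ≤ b) (hab : a + b = 1) (z : E) :
      ⟪z, a • y₁ + b • y₂⟫ - h z ≤ a * hs y₁ + b * hs y₂ := by
    have h₁ := inner_sub_le_of_mem_conjugateDomain hconj hy₁ z
    have h₂ := inner_sub_le_of_mem_conjugateDomain hconj hy₂ z
    rw [inner_add_right, real_inner_smul_right, real_inner_smul_right]
    linear_combination a * h₁ + b * h₂ + h z * hab
  refine ⟨fun y₁ hy₁ y₂ hy₂ a b ha hb hab => ?_, fun y₁ hy₁ y₂ hy₂ a b ha hb hab => ?_⟩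
  · exact ⟨_, forall_mem_range.2 (hcomb hy₁ hy₂ ha hb hab)⟩
  · rw [hconj]
    exact ciSup_le (hcomb hy₁ hy₂ ha hb hab)

variable [CompleteSpace E]

theorem inner_sub_le_of_hasGradientAt (hconv : ConvexOn ℝ univ h) {g x : E}
    (hg : HasGradientAt h g x) (z : E) : ⟪z, g⟫ - h z ≤ ⟪x, g⟫ - h x := by
  have := hconv.add_inner_gradient_le trivial trivial hg (y := z)
  rw [inner_sub_right, real_inner_comm z, real_inner_comm x] at this
  linarith

theorem mem_conjugateDomain_of_hasGradientAt (hconv : ConvexOn ℝ univ h) {g x : E}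
    (hg : HasGradientAt h g x) : g ∈ conjugateDomain h :=
  ⟨_, forall_mem_range.2 (inner_sub_le_of_hasGradientAt hconv hg)⟩

theorem conj_apply_of_hasGradientAt (hconv : ConvexOn ℝ univ h)
    (hconj : ∀ y, hs y = ⨆ z, ⟪z, y⟫ - h z) {g x : E} (hg : HasGradientAt h g x) :
    hs g = ⟪x, g⟫ - h x :=
  le_antisymm (hconj g ▸ ciSup_le (inner_sub_le_of_hasGradientAt hconv hg))
    (inner_sub_le_of_mem_conjugateDomain hconj (mem_conjugateDomain_of_hasGradientAt hconv hg) x)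

variable {h' hs' : E → E} (hconv : ConvexOn ℝ univ h) (hgrad : ∀ z, HasGradientAt h (h' z) z)
  (hsgrad : ∀ y, HasGradientAt hs (hs' y) y) (hconj : ∀ y, hs y = ⨆ z, ⟪z, y⟫ - h z)
  (hinv : ∀ z, hs' (h' z) = z)
include hconv hgrad hsgrad hconj hinv

/-- Walk from `h' z` towards `y₀` up to the last point `p` of the closed set `conjugateDomain h`.
Beyond `p` the conjugate vanishes, so `hs' p` is orthogonal to the direction; monotonicity of the
gradient of the convex function `hs` then compares `hs' p` with `hs' (h' z) = z`. -/
theorem inner_sub_gradient_nonpos_of_notMem_conjugateDomain {y₀ : E}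
    (hy₀ : y₀ ∉ conjugateDomain h) (z : E) : ⟪z, y₀ - h' z⟫ ≤ 0 := by
  set u := h' z
  have hu : u ∈ conjugateDomain h := mem_conjugateDomain_of_hasGradientAt hconv (hgrad z)
  have hclosed : IsClosed (conjugateDomain h) := isClosed_conjugateDomain hconj <|
    continuous_iff_continuousAt.2 fun y => (hsgrad y).differentiableAt.continuousAt
  obtain ⟨τ, hτ, hp, hout⟩ := hclosed.exists_lineMap_mem_forall_notMem hu hy₀
  set p := lineMap u y₀ τ
  have horth : ⟪hs' p, y₀ - u⟫ = 0 :=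
    (hsgrad p).hasDerivAt_comp_lineMap.eq_zero_of_eqOn_Ioo hτ.2 fun t ht => by
      simp [hconj, Real.iSup_of_not_bddAbove (hout t ⟨ht.1, ht.2.le⟩)]
  have hmono := (convexOn_conjugateDomain hconj).inner_gradient_sub_nonneg hu hp
    (hsgrad u) (hsgrad p)
  rw [hinv, ← vsub_eq_sub p, lineMap_vsub_left, vsub_eq_sub, real_inner_smul_right,
    inner_sub_left, horth] at hmono
  rcases hτ.1.eq_or_lt with hτ0 | hτpos
  · rw [show p = u by simp [p, ← hτ0], hinv] at horth
    exact horth.le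
  · nlinarith

/-- Outside the domain, `z ↦ ⟪z, y₀⟫ - h z` would decrease along every ray from `0`, hence be
bounded by its value at `0`. -/
theorem conjugateDomain_eq_univ : conjugateDomain h = univ := by
  refine eq_univ_of_forall fun y₀ => by_contra fun hy₀ => hy₀ ⟨⟪0, y₀⟫ - h 0, ?_⟩
  rintro _ ⟨z, rfl⟩
  exact apply_le_apply_zero_of_inner_gradient_nonpos (fun z => (hgrad z).inner_const_sub y₀)
    (inner_sub_gradient_nonpos_of_notMem_conjugateDomain hconv hgrad hsgrad hconj hinv hy₀) z

theorem gradient_apply_gradient_conj (w : E) : h' (hs' w) = w := by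
  set x := hs' w
  have hsconv : ConvexOn ℝ univ hs :=
    conjugateDomain_eq_univ hconv hgrad hsgrad hconj hinv ▸ convexOn_conjugateDomain hconj
  have htangent := hsconv.add_inner_gradient_le trivial trivial (hsgrad w) (y := h' x)
  rw [conj_apply_of_hasGradientAt hconv hconj (hgrad x), inner_sub_right] at htangent
  have hmax : IsLocalMax (fun z => ⟪z, w⟫ - h z) x := Eventually.of_forall fun z => by
    have := inner_sub_le_of_mem_conjugateDomain hconj
      (conjugateDomain_eq_univ hconv hgrad hsgrad hconj hinv ▸ mem_univ w) z
    dsimp only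
    linarith
  exact (sub_eq_zero.1 (hmax.hasGradientAt_eq_zero ((hgrad x).inner_const_sub w))).symm

end Conjugate

section Bregman

variable {d : ℕ} {g : EuclideanSpace ℝ (Fin d) → ℝ}
  {g' : EuclideanSpace ℝ (Fin d) → EuclideanSpace ℝ (Fin d)}

theorem Dbreg_nonneg (hconv : ConvexOn ℝ univ g) (hgrad : ∀ z, HasGradientAt g (g' z) z)
    (x y : EuclideanSpace ℝ (Fin d)) : 0 ≤ Dbreg g g' x y := by
  have := hconv.add_inner_gradient_le trivial trivial (hgrad y) (y := x)
  rw [Dbreg]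
  linarith

theorem Dbreg_sub_Dbreg (x y z : EuclideanSpace ℝ (Fin d)) :
    Dbreg g g' x z - Dbreg g g' y z = Dbreg g g' x y + ⟪g' y - g' z, x - y⟫ := by
  simp only [Dbreg, inner_sub_left, inner_sub_right]
  ring

theorem Dbreg_add_Dbreg (x y : EuclideanSpace ℝ (Fin d)) :
    Dbreg g g' x y + Dbreg g g' y x = ⟪g' x - g' y, x - y⟫ := by
  rw [Dbreg, Dbreg, ← neg_sub x y, inner_neg_right, inner_sub_left]
  ring

theorem mirror_step_descent {f h : EuclideanSpace ℝ (Fin d) → ℝ}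
    {f' h' : EuclideanSpace ℝ (Fin d) → EuclideanSpace ℝ (Fin d)} {L η : ℝ}
    {x y : EuclideanSpace ℝ (Fin d)} (hη : 0 ≤ η) (hηL : η * L ≤ 1)
    (hsmooth : Dbreg f f' y x ≤ L * Dbreg h h' y x) (hD : 0 ≤ Dbreg h h' y x)
    (hstep : h' y = h' x - η • f' x) :
    η * (f y - f x) + Dbreg h h' x y ≤ 0 := by
  have hcross : η * ⟪f' x, y - x⟫ = -(Dbreg h h' x y + Dbreg h h' y x) := by
    rw [Dbreg_add_Dbreg, ← real_inner_smul_left, ← neg_sub y x, inner_neg_right,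
      show η • f' x = h' x - h' y by rw [hstep]; abel, neg_neg]
  have hf : f y - f x = ⟪f' x, y - x⟫ + Dbreg f f' y x := by
    rw [Dbreg]
    ring
  rw [hf, mul_add, hcross]
  nlinarith [mul_le_mul_of_nonneg_left hsmooth hη, mul_nonneg (sub_nonneg.2 hηL) hD]

/-- The cross term of the three-point identity is linear in the centred noise `G - m`. -/
theorem integral_Dbreg_sub_integral_Dbreg {Ω : Type*} [MeasurableSpace Ω] (μ : Measure Ω)
    [IsProbabilityMeasure μ] {T : EuclideanSpace ℝ (Fin d) → EuclideanSpace ℝ (Fin d)}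
    (hT : ∀ w, g' (T w) = w) {x : EuclideanSpace ℝ (Fin d)} (hTx : T (g' x) = x) (η : ℝ)
    {G : Ω → EuclideanSpace ℝ (Fin d)} {m : EuclideanSpace ℝ (Fin d)} (hG : ∫ ω, G ω ∂μ = m)
    (hint₁ : Integrable (fun ω => Dbreg g g' x (T (g' x - η • G ω))) μ)
    (hint₂ : Integrable (fun ω => Dbreg g g' (T (g' x - η • m)) (T (g' x - η • G ω))) μ) :
    ∫ ω, Dbreg g g' x (T (g' x - η • G ω)) ∂μ
      - ∫ ω, Dbreg g g' (T (g' x - η • m)) (T (g' x - η • G ω)) ∂μ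
      = Dbreg g g' x (T (g' x - η • m)) := by
  set x' := T (g' x - η • m)
  have hpt (ω : Ω) : Dbreg g g' x (T (g' x - η • G ω)) - Dbreg g g' x' (T (g' x - η • G ω))
      = Dbreg g g' x x' + η * ⟪x - x', G ω - m⟫ := by
    rw [Dbreg_sub_Dbreg, hT, hT, real_inner_comm, ← real_inner_smul_right,
      show g' x - η • m - (g' x - η • G ω) = η • (G ω - m) by rw [smul_sub]; abel]
  rw [← integral_sub hint₁ hint₂, integral_congr_ae (Eventually.of_forall hpt)]
  by_cases hGint : Integrable G μ
  · have hGm : Integrable (fun ω => G ω - m) μ := hGint.sub (integrable_const m)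
    rw [integral_add (integrable_const _) ((hGm.const_inner _).const_mul η), integral_const_mul,
      integral_inner hGm, integral_sub hGint (integrable_const m), hG]
    simp
  · -- `∫ G = 0` by convention, so `x' = x` and every term vanishes.
    have hx' : x' = x := by
      rw [show x' = T (g' x - η • m) from rfl, ← hG, integral_undef hGint, smul_zero, sub_zero,
        hTx]
    simp [hx']

end Bregman

theorem variance_bound_at_transformed_optimum_general {d : ℕ} {Ω : Type*} [MeasurableSpace Ω]
    (μ : Measure Ω) [IsProbabilityMeasure μ]
    (h hs f : EuclideanSpace ℝ (Fin d) → ℝ)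
    (h' hs' f' : EuclideanSpace ℝ (Fin d) → EuclideanSpace ℝ (Fin d))
    (fxi' : Ω → EuclideanSpace ℝ (Fin d) → EuclideanSpace ℝ (Fin d))
    (L η : ℝ) (hL : 0 < L) (hη : 0 < η) (hηL : η ≤ 1 / L)
    (hconv : StrictConvexOn ℝ Set.univ h)
    (hgrad : ∀ z, HasGradientAt h (h' z) z)
    (hsgrad : ∀ y, HasGradientAt hs (hs' y) y)
    (hconj : ∀ y, hs y = ⨆ z, (⟪z, y⟫ - h z))
    (hinv : ∀ z, hs' (h' z) = z)
    (hmeangrad : ∀ z, ∫ ω, fxi' ω z ∂μ = f' z)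
    (hsmooth : ∀ u v, Dbreg f f' u v ≤ L * Dbreg h h' u v)
    (xstar : EuclideanSpace ℝ (Fin d))
    (hmin : ∀ z, f xstar ≤ f z)
    (feta : EuclideanSpace ℝ (Fin d) → ℝ)
    (hfeta : ∀ z, feta z
      = f z - (1 / η) * ∫ ω, Dbreg h h' z (hs' (h' z - η • fxi' ω z)) ∂μ)
    (xeta : EuclideanSpace ℝ (Fin d))
    (hint1 : Integrable
      (fun ω => Dbreg h h' xeta (hs' (h' xeta - η • fxi' ω xeta))) μ)
    (hint2 : Integrable
      (fun ω => Dbreg h h' (hs' (h' xeta - η • f' xeta))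
        (hs' (h' xeta - η • fxi' ω xeta))) μ) :
    (f xstar - feta xeta) / η
      ≤ (1 / η ^ 2) * ∫ ω, Dbreg h h' (hs' (h' xeta - η • f' xeta))
          (hs' (h' xeta - η • fxi' ω xeta)) ∂μ := by
  have hconvex := hconv.convexOn
  have hgrad_inv := gradient_apply_gradient_conj hconvex hgrad hsgrad hconj hinv
  set xb := hs' (h' xeta - η • f' xeta)
  have hηL' : η * L ≤ 1 := by rwa [le_div_iff₀ hL] at hηL
  have hdescent : η * (f xb - f xeta) + Dbreg h h' xeta xb ≤ 0 :=
    mirror_step_descent hη.le hηL' (hsmooth xb xeta) (Dbreg_nonneg hconvex hgrad xb xeta) (hgrad_inv _)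
  have hshift := integral_Dbreg_sub_integral_Dbreg μ hgrad_inv (hinv xeta) η (hmeangrad xeta)
    hint1 hint2
  have hgap : (f xstar - feta xeta) / η
      = (1 / η ^ 2) * ∫ ω, Dbreg h h' xb (hs' (h' xeta - η • fxi' ω xeta)) ∂μ
        + (η * (f xstar - f xeta) + Dbreg h h' xeta xb) / η ^ 2 := by
    rw [hfeta, ← hshift]
    field_simp
    ring
  rw [hgap]
  refine add_le_of_nonpos_right (div_nonpos_of_nonpos_of_nonneg ?_ (sq_nonneg η))
  linarith [mul_le_mul_of_nonneg_left (hmin xb) hη.le]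

/-- variance bound at the transformed optimum `x_η`. -/
theorem variance_bound_at_transformed_optimum {d : ℕ} {Ω : Type*} [MeasurableSpace Ω]
    (μ : Measure Ω) [IsProbabilityMeasure μ]
    (h hs f : EuclideanSpace ℝ (Fin d) → ℝ)
    (h' hs' f' : EuclideanSpace ℝ (Fin d) → EuclideanSpace ℝ (Fin d))
    (fxi : Ω → EuclideanSpace ℝ (Fin d) → ℝ)
    (fxi' : Ω → EuclideanSpace ℝ (Fin d) → EuclideanSpace ℝ (Fin d))
    (L η : ℝ) (hL : 0 < L) (hη : 0 < η) (hηL : η ≤ 1 / L)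
    (hconv : StrictConvexOn ℝ Set.univ h)
    (hC2 : ContDiff ℝ 2 h)
    (hgrad : ∀ z, HasGradientAt h (h' z) z)
    (hsgrad : ∀ y, HasGradientAt hs (hs' y) y)
    (hconj : ∀ y, hs y = ⨆ z, (⟪z, y⟫ - h z))
    (hinv : ∀ z, hs' (h' z) = z)
    (hfconv : ConvexOn ℝ Set.univ f)
    (hfgrad : ∀ z, HasGradientAt f (f' z) z)
    (hfxgrad : ∀ ω z, HasGradientAt (fxi ω) (fxi' ω z) z)
    (hmean : ∀ z, ∫ ω, fxi ω z ∂μ = f z)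
    (hmeangrad : ∀ z, ∫ ω, fxi' ω z ∂μ = f' z)
    (hsmooth : ∀ u v, Dbreg f f' u v ≤ L * Dbreg h h' u v)
    (xstar : EuclideanSpace ℝ (Fin d))
    (hmin : ∀ z, f xstar ≤ f z) (hstargrad : f' xstar = 0)
    (feta : EuclideanSpace ℝ (Fin d) → ℝ)
    (hfeta : ∀ z, feta z
      = f z - (1 / η) * ∫ ω, Dbreg h h' z (hs' (h' z - η • fxi' ω z)) ∂μ)
    (xeta : EuclideanSpace ℝ (Fin d))
    (hmineta : ∀ z, feta xeta ≤ feta z)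
    (hint1 : Integrable
      (fun ω => Dbreg h h' xeta (hs' (h' xeta - η • fxi' ω xeta))) μ)
    (hint2 : Integrable
      (fun ω => Dbreg h h' (hs' (h' xeta - η • f' xeta))
        (hs' (h' xeta - η • fxi' ω xeta))) μ) :
    (f xstar - feta xeta) / η
      ≤ (1 / η ^ 2) * ∫ ω, Dbreg h h' (hs' (h' xeta - η • f' xeta))
          (hs' (h' xeta - η • fxi' ω xeta)) ∂μ :=
  variance_bound_at_transformed_optimum_general μ h hs f h' hs' f' fxi' L η hL hη hηL hconv hgrad
    hsgrad hconj hinv hmeangrad hsmooth xstar hmin feta hfeta xeta hint1 hint2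
end
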